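/- Let R = ⟨X, Y, ⊏⟩ be a relational system, θ an infinite cardinal, and I a set with |I| ≥ θ. Then: (a) C_{[I]^{<θ}} ⪯_T R if and only if there exists a strongly θ-R-unbounded family ⟨x_i : i ∈ I⟩ in X; (b) b(R) ≥ θ if and only if R ⪯_T C_{[X]^{<θ}}. -/
import Mathlib


open Cardinal Set

universe u

/-- A relational system `⟨X, Y, R⟩`. -/
structure RelSys : Type (u + 1) where
  X : Type u
  Y : Type u
  R : X → Y → Prop

/-- Tukey connection: `A ⪯_T B`. -/
def Tukey (A B : RelSys.{u}) : Prop :=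
  ∃ (φ : A.X → B.X) (ψ : B.Y → A.Y), ∀ x y, B.R (φ x) y → A.R x (ψ y)

/-- Let `R = ⟨X, Y, r⟩` be a relational system, `θ` an infinite cardinal and `ι`
a set with `|ι| ≥ θ`.  Then:
(a) `C_{[ι]^{<θ}} ⪯_T R` iff there is a strongly `θ`-`R`-unbounded family
`⟨x_i : i ∈ ι⟩` (i.e. for every `y ∈ Y`, `|{i : r (x i) y}| < θ`);
(b) `𝔟(R) ≥ θ` (every subset of `X` of size `< θ` is bounded) iff
`R ⪯_T C_{[X]^{<θ}}`. -/
theorem stmt19 {ι X Y : Type u} (r : X → Y → Prop) (θ : Cardinal.{u})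
    (hθ : ℵ₀ ≤ θ) (hι : θ ≤ #ι) :
    (Tukey ⟨ι, ↥{A : Set ι | #↥A < θ}, fun i A => i ∈ A.1⟩ ⟨X, Y, r⟩ ↔
      ∃ x : ι → X, ∀ y : Y, #↥{i : ι | r (x i) y} < θ) ∧
    ((∀ F : Set X, #↥F < θ → ∃ y : Y, ∀ x ∈ F, r x y) ↔
      Tukey ⟨X, Y, r⟩ ⟨X, ↥{A : Set X | #↥A < θ}, fun x A => x ∈ A.1⟩) := by
  constructor
  · constructor
    · rintro ⟨φ, ψ, h⟩
      exact ⟨φ, fun y => lt_of_le_of_lt (Cardinal.mk_le_mk_of_subset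
        (fun i hi => h i y hi)) (ψ y).2⟩
    · rintro ⟨x, hx⟩
      exact ⟨x, fun y => ⟨{i | r (x i) y}, hx y⟩, fun i y h => h⟩
  · constructor
    · intro hb
      choose g hg using hb
      exact ⟨id, fun A => g A.1 A.2, fun x A h => hg A.1 A.2 x h⟩
    · rintro ⟨φ, ψ, h⟩ F hF
      refine ⟨ψ ⟨φ '' F, lt_of_le_of_lt Cardinal.mk_image_le hF⟩, fun x hx => ?_⟩
      exact h x _ ⟨x, hx, rfl⟩
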